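/- Let G be a finite group with left regular representation R : G → Matrix G G ℝ, let q : G → ℝ with q(h) ≥ 0 for all h, and let t > 0. Write Matrix.exp(t • (∑_{h∈G} q(h) • R(h) − 1)) = ∑_{μ∈G} w_μ • R(μ), where (uniquely) w_μ = (1/|G|)·Tr((R μ)ᵀ · Matrix.exp(t • (∑_{h∈G} q(h) • R(h) − 1))). Then for every μ ∈ G: w_μ > 0 if and only if μ belongs to the subgroup Subgroup.closure {h ∈ G : q(h) ≠ 0} generated by the support of q. In particular, the accessible map at any time t > 0 is a mixture, with strictly positive weights, of exactly the elements of the smallest subgroup containing all channels appearing in the Lindblad generator. -/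

import Mathlib

/-!
Writing `A = ∑ q h • R h`, the entry `A a b = q (a * b⁻¹)` depends only on `a * b⁻¹`. The
matrices with this right invariance form a closed subalgebra, so it contains
`M = exp (t • (A - 1))`; for such a matrix the trace formula reads `w μ = M μ 1`, and
`M = ∑ M μ 1 • R μ`. Since `M = e^{-t} ∑ tⁿ/n! • Aⁿ` with `Aⁿ` entrywise nonnegative, `w μ > 0`
iff `(Aⁿ) μ 1 > 0` for some `n`, i.e. iff `μ` is a product of `n` elements of the support of
`q`. In a finite group these products exhaust the generated subgroup.
-/

open Matrix

open scoped Nat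

namespace Matrix

variable {ι : Type*} [Fintype ι] [DecidableEq ι]

theorem hasSum_exp_apply {𝕂 : Type*} [RCLike 𝕂] (B : Matrix ι ι 𝕂) (i j : ι) :
    HasSum (fun n : ℕ => (B ^ n) i j / n !) (NormedSpace.exp B i j) := by
  open scoped Matrix.Norms.Operator in
  have h := NormedSpace.exp_series_hasSum_exp' (𝕂 := 𝕂) B
  convert Pi.hasSum.mp (Pi.hasSum.mp h i) j using 1
  · ext n
    simp [div_eq_inv_mul]
  · rfl

theorem exp_apply_pos_iff_exists_pow_apply_pos {B : Matrix ι ι ℝ} (hB : ∀ i j, 0 ≤ B i j)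
    (i j : ι) : 0 < NormedSpace.exp B i j ↔ ∃ n : ℕ, 0 < (B ^ n) i j := by
  have hterm (n : ℕ) : 0 ≤ (B ^ n) i j / n ! := by
    have := pow_apply_nonneg hB n i j
    positivity
  have hsum := hasSum_exp_apply B i j
  constructor
  · intro hpos
    by_contra! hzero
    have hvanish (n : ℕ) : (B ^ n) i j / n ! = 0 := by
      rw [(hzero n).antisymm (pow_apply_nonneg hB n i j), zero_div]
    simp [hsum.unique (hasSum_zero.congr_fun hvanish)] at hpos
  · rintro ⟨n, hn⟩
    rw [← hsum.tsum_eq]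
    exact hsum.summable.tsum_pos hterm n (by positivity)

theorem exp_smul_sub_one (A : Matrix ι ι ℝ) (t : ℝ) :
    NormedSpace.exp (t • (A - 1)) = Real.exp (-t) • NormedSpace.exp (t • A) := by
  have hsplit : t • (A - 1) = algebraMap ℝ _ (-t) + t • A := by
    rw [Algebra.algebraMap_eq_smul_one]
    module
  have hexp : NormedSpace.exp (algebraMap ℝ (Matrix ι ι ℝ) (-t)) =
      algebraMap ℝ _ (Real.exp (-t)) := by
    rw [Real.exp_eq_exp_ℝ]
    open scoped Matrix.Norms.Operator in exact (NormedSpace.algebraMap_exp_comm (-t)).symm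
  rw [hsplit, exp_add_of_commute _ _ (Algebra.commute_algebraMap_left _ _), hexp,
    ← Algebra.smul_def]

end Matrix

section RegularRepresentation

variable {G : Type*} [Group G]

def convMatrix {R : Type*} (f : G → R) : Matrix G G R :=
  of fun a b => f (a * b⁻¹)

@[simp]
theorem convMatrix_apply {R : Type*} (f : G → R) (a b : G) : convMatrix f a b = f (a * b⁻¹) :=
  rfl

variable [DecidableEq G]

def regularMatrix (R : Type*) [Zero R] [One R] (g : G) : Matrix G G R :=
  of fun a b => if a = g * b then 1 else 0

variable [Fintype G]

theorem sum_smul_regularMatrix {R : Type*} [Semiring R] (f : G → R) :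
    ∑ g, f g • regularMatrix R g = convMatrix f := by
  ext a b
  simp [regularMatrix, Matrix.sum_apply, ← mul_inv_eq_iff_eq_mul]

def rightInvariantMatrices (R : Type*) [CommSemiring R] : Subalgebra R (Matrix G G R) where
  carrier := {M | ∀ a b g : G, M (a * g) (b * g) = M a b}
  mul_mem' {M N} hM hN a b g := by
    simp only [Set.mem_ofPred_eq, mul_apply] at *
    exact (Fintype.sum_equiv (Equiv.mulRight g) _ _ fun c => by simp [hM, hN]).symm
  add_mem' hM hN a b g := by simp_all
  algebraMap_mem' r a b g := by simp [algebraMap_eq_diagonal, diagonal_apply]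

section CommSemiring

variable {R : Type*} [CommSemiring R]

theorem convMatrix_mem_rightInvariantMatrices (f : G → R) :
    convMatrix f ∈ rightInvariantMatrices (G := G) R := fun a b g => by
  simp [_root_.mul_inv_rev, mul_assoc]

theorem isClosed_rightInvariantMatrices [TopologicalSpace R] [T2Space R] :
    IsClosed (rightInvariantMatrices (G := G) R : Set (Matrix G G R)) := by
  simp only [rightInvariantMatrices, Subalgebra.coe_mk, Set.ofPred_forall]
  refine isClosed_iInter fun a => isClosed_iInter fun b => isClosed_iInter fun g => ?_
  exact isClosed_eq (by fun_prop) (by fun_prop)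

theorem eq_convMatrix_of_mem_rightInvariantMatrices {M : Matrix G G R}
    (hM : M ∈ rightInvariantMatrices R) : M = convMatrix fun g => M g 1 := by
  ext a b
  simpa using hM (a * b⁻¹) 1 b

theorem trace_transpose_regularMatrix_mul_of_mem_rightInvariantMatrices {M : Matrix G G R}
    (hM : M ∈ rightInvariantMatrices R) (μ : G) :
    trace ((regularMatrix R μ)ᵀ * M) = Fintype.card G • M μ 1 := by
  have hdiag (a : G) : ((regularMatrix R μ)ᵀ * M) a a = M μ 1 := by
    simpa [regularMatrix, mul_apply] using hM μ 1 a
  simp [trace, hdiag]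

end CommSemiring

theorem exists_pow_convMatrix_apply_pos_iff_mem_closure {R : Type*} [CommSemiring R]
    [LinearOrder R] [IsStrictOrderedRing R] {q : G → R} (hq : ∀ h, 0 ≤ q h) (μ : G) :
    (∃ n : ℕ, 0 < (convMatrix q ^ n) μ 1) ↔ μ ∈ Subgroup.closure {h | q h ≠ 0} := by
  have hA (a b : G) : 0 ≤ convMatrix q a b := hq _
  rw [← Subgroup.mem_toSubmonoid, Subgroup.closure_toSubmonoid_of_finite]
  constructor
  · rintro ⟨n, hn⟩
    induction n generalizing μ with
    | zero =>
      obtain rfl : μ = 1 := by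
        by_contra h
        simp [one_apply, h] at hn
      exact one_mem _
    | succ n ih =>
      rw [pow_succ', mul_apply] at hn
      obtain ⟨c, -, hc⟩ := Finset.exists_ne_zero_of_sum_ne_zero hn.ne'
      simpa using mul_mem (Submonoid.subset_closure (left_ne_zero_of_mul hc))
        (ih c ((pow_apply_nonneg hA n c 1).lt_of_ne' (right_ne_zero_of_mul hc)))
  · intro hμ
    induction hμ using Submonoid.closure_induction with
    | mem x hx => exact ⟨1, by simpa using (hq x).lt_of_ne' hx⟩
    | one => exact ⟨0, by simp⟩
    | mul x y _ _ hx hy =>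
      obtain ⟨n, hn⟩ := hx
      obtain ⟨m, hm⟩ := hy
      have hinv : (convMatrix q ^ n) (x * y) y = (convMatrix q ^ n) x 1 := by
        simpa using pow_mem (convMatrix_mem_rightInvariantMatrices q) n x 1 y
      refine ⟨n + m, ?_⟩
      rw [pow_add, mul_apply]
      refine Finset.sum_pos' (fun c _ => mul_nonneg (pow_apply_nonneg hA n _ _)
        (pow_apply_nonneg hA m _ _)) ⟨y, Finset.mem_univ y, ?_⟩
      rw [hinv]
      exact mul_pos hn hm

end RegularRepresentation

/-- For the left regular representation of a finite group and `t > 0`, writing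
`exp(t•(∑ q h • R h − 1)) = ∑ w μ • R μ` with the (unique) weights given by the trace formula,
a weight `w μ` is strictly positive iff `μ` lies in the subgroup generated by the support of
`q`: the accessible map is a strictly positive mixture of exactly the elements of the smallest
subgroup containing all channels in the Lindblad generator. -/
theorem accessible_weights_positive_iff_mem_closure_support
    {G : Type*} [Group G] [Fintype G] [DecidableEq G]
    (R : G → Matrix G G ℝ)
    (hR : ∀ g a b : G, R g a b = if a = g * b then 1 else 0)
    (q : G → ℝ) (hq : ∀ h : G, 0 ≤ q h)
    (t : ℝ) (ht : 0 < t)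
    (w : G → ℝ)
    (hw : ∀ μ : G, w μ = (1 / (Fintype.card G : ℝ)) *
      Matrix.trace ((R μ)ᵀ * NormedSpace.exp (t • ((∑ h : G, q h • R h) - 1)))) :
    NormedSpace.exp (t • ((∑ h : G, q h • R h) - 1)) = (∑ μ : G, w μ • R μ) ∧
      ∀ μ : G, (0 < w μ ↔ μ ∈ Subgroup.closure {h : G | q h ≠ 0}) := by
  obtain rfl : R = regularMatrix ℝ := funext fun g => Matrix.ext (hR g)
  rw [sum_smul_regularMatrix] at hw ⊢
  set M := NormedSpace.exp (t • (convMatrix q - 1)) with hMdef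
  have hM : M ∈ rightInvariantMatrices ℝ :=
    NormedSpace.exp_mem isClosed_rightInvariantMatrices
      (Subalgebra.smul_mem _ (sub_mem (convMatrix_mem_rightInvariantMatrices q) (one_mem _)) t)
  obtain rfl : w = fun μ => M μ 1 := funext fun μ => by
    rw [hw, trace_transpose_regularMatrix_mul_of_mem_rightInvariantMatrices hM, nsmul_eq_mul,
      one_div, inv_mul_cancel_left₀ (Nat.cast_ne_zero.mpr Fintype.card_ne_zero)]
  refine ⟨by rw [sum_smul_regularMatrix]; exact eq_convMatrix_of_mem_rightInvariantMatrices hM,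
    fun μ => ?_⟩
  show 0 < M μ 1 ↔ _
  have htq (a b : G) : 0 ≤ (t • convMatrix q) a b := mul_nonneg ht.le (hq _)
  rw [hMdef, exp_smul_sub_one, Matrix.smul_apply, smul_eq_mul,
    mul_pos_iff_of_pos_left (Real.exp_pos _), exp_apply_pos_iff_exists_pow_apply_pos htq,
    ← exists_pow_convMatrix_apply_pos_iff_mem_closure hq μ]
  refine exists_congr fun n => ?_
  rw [smul_pow, Matrix.smul_apply, smul_eq_mul, mul_pos_iff_of_pos_left (pow_pos ht n)]
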